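/- arXiv:2102.13079 — 3 statements merged into one kernel-verified Lean document; each statement's English description precedes it below -/
import Mathlib

section
/- Let (X, Y) be bivariate normal with mean 0, unit variances, and correlation ρ ∈ [−1, 1], and let τ ~ Uniform(0, 2π) be independent. Then E[cos(γX + τ) cos(γY + τ)] = (1/2) e^{−γ²(1 − ρ)} for any γ > 0. -/
/-!
Averaging over the uniform phase `τ` turns `cos (γX + τ) * cos (γY + τ)` into
`cos (γX - γY) / 2`: by the product-to-sum formula the remaining term is `cos (2τ + ⋯)`,
which integrates to zero over a period. With `Y = ρX + √(1 - ρ²) Z`, the difference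
`γX - γY = γ(1 - ρ) X - γ√(1 - ρ²) Z` is a linear form in independent standard normals, and
the Gaussian characteristic function gives `E cos (cX + dZ) = exp (-(c² + d²) / 2)`, where
here `c² + d² = 2γ²(1 - ρ)`.
-/

open MeasureTheory ProbabilityTheory Real Set

noncomputable def uniform02pi : Measure ℝ :=
  (ENNReal.ofReal (2 * π))⁻¹ • volume.restrict (Set.Ioo 0 (2 * π))

open Complex in
theorem integral_cos_add_mul_eq_re_charFun (μ : Measure ℝ) [IsFiniteMeasure μ] (a t : ℝ) :
    ∫ x, Real.cos (a + t * x) ∂μ = (cexp (a * I) * charFun μ t).re := by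
  have h_int : Integrable (fun x ↦ cexp ((a + t * x : ℝ) * I)) μ :=
    .of_bound (by fun_prop) 1 (ae_of_all _ fun x ↦ (norm_exp_ofReal_mul_I _).le)
  calc ∫ x, Real.cos (a + t * x) ∂μ = ∫ x, (cexp ((a + t * x : ℝ) * I)).re ∂μ := by
        simp_rw [exp_ofReal_mul_I_re]
    _ = (∫ x, cexp ((a + t * x : ℝ) * I) ∂μ).re := integral_re h_int
    _ = (cexp (a * I) * charFun μ t).re := by
        rw [charFun_apply_real, ← integral_const_mul]
        congr 2 with x
        rw [← Complex.exp_add]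
        push_cast
        ring_nf

open Complex in
theorem integral_cos_add_mul_gaussianReal (m : ℝ) (v : NNReal) (a t : ℝ) :
    ∫ x, Real.cos (a + t * x) ∂gaussianReal m v =
      Real.cos (a + t * m) * rexp (-(v * t ^ 2 / 2)) := by
  have h_exponent : (a : ℂ) * I + (t * m * I - v * t ^ 2 / 2) =
      ((-(v * t ^ 2 / 2) : ℝ) : ℂ) + ((a + t * m : ℝ) : ℂ) * I := by
    push_cast
    ring
  rw [integral_cos_add_mul_eq_re_charFun, charFun_gaussianReal, ← Complex.exp_add, h_exponent,
    Complex.exp_add, ← ofReal_exp, re_ofReal_mul, exp_ofReal_mul_I_re, mul_comm]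

theorem integral_cos_add_mul_add_mul_gaussianReal_prod (a c d : ℝ) :
    ∫ q, Real.cos (a + c * q.1 + d * q.2) ∂(gaussianReal 0 1).prod (gaussianReal 0 1) =
      Real.cos a * rexp (-(c ^ 2 + d ^ 2) / 2) := by
  have h_int : Integrable (fun q : ℝ × ℝ ↦ Real.cos (a + c * q.1 + d * q.2))
      ((gaussianReal 0 1).prod (gaussianReal 0 1)) :=
    .of_bound (by fun_prop) 1 (ae_of_all _ fun q ↦ by simpa using abs_cos_le_one _)
  rw [integral_prod _ h_int]
  simp_rw [integral_cos_add_mul_gaussianReal, mul_zero, add_zero]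
  rw [integral_mul_const, integral_cos_add_mul_gaussianReal, mul_zero, add_zero, mul_assoc,
    ← Real.exp_add, NNReal.coe_one]
  ring_nf

instance isProbabilityMeasure_uniform02pi : IsProbabilityMeasure uniform02pi := by
  constructor
  rw [uniform02pi, Measure.smul_apply, Measure.restrict_apply_univ, Real.volume_Ioo, sub_zero,
    smul_eq_mul, ENNReal.inv_mul_cancel (by positivity) ENNReal.ofReal_ne_top]

theorem integral_cos_add_mul_cos_add_zero_two_pi (a b : ℝ) :
    ∫ τ in 0..2 * π, Real.cos (a + τ) * Real.cos (b + τ) = π * Real.cos (a - b) := by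
  have h_prod : ∀ τ, Real.cos (a + τ) * Real.cos (b + τ) =
      (Real.cos (a - b) + Real.cos (2 * τ + (a + b))) / 2 := fun τ ↦ by
    rw [show a - b = (a + τ) - (b + τ) by ring,
      show 2 * τ + (a + b) = (a + τ) + (b + τ) by ring,
      Real.cos_sub (a + τ), Real.cos_add (a + τ)]
    ring
  simp_rw [h_prod]
  rw [intervalIntegral.integral_div, intervalIntegral.integral_add intervalIntegrable_const
    ((by fun_prop : Continuous fun τ ↦ Real.cos (2 * τ + (a + b))).intervalIntegrable _ _),
    intervalIntegral.integral_comp_mul_add Real.cos two_ne_zero, integral_cos,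
    show 2 * (2 * π) + (a + b) = (a + b) + 2 * π + 2 * π by ring, Real.sin_add_two_pi,
    Real.sin_add_two_pi]
  simp only [intervalIntegral.integral_const, sub_zero, smul_eq_mul, mul_zero, zero_add, sub_self,
    add_zero]
  ring

theorem integral_cos_add_mul_cos_add_uniform02pi (a b : ℝ) :
    ∫ τ, Real.cos (a + τ) * Real.cos (b + τ) ∂uniform02pi = Real.cos (a - b) / 2 := by
  rw [uniform02pi, integral_smul_measure, ← integral_Ioc_eq_integral_Ioo,
    ← intervalIntegral.integral_of_le (by positivity), integral_cos_add_mul_cos_add_zero_two_pi,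
    ENNReal.toReal_inv, ENNReal.toReal_ofReal (by positivity), smul_eq_mul]
  field_simp

theorem stmt5_general (γ ρ : ℝ) (hρ : ρ ∈ Set.Icc (-1 : ℝ) 1) :
    ∫ p : (ℝ × ℝ) × ℝ,
        Real.cos (γ * p.1.1 + p.2) *
        Real.cos (γ * (ρ * p.1.1 + Real.sqrt (1 - ρ ^ 2) * p.1.2) + p.2)
        ∂(((gaussianReal 0 1).prod (gaussianReal 0 1)).prod uniform02pi) =
      (1 / 2) * Real.exp (-γ ^ 2 * (1 - ρ)) := by
  set s := √(1 - ρ ^ 2)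
  have hs : s ^ 2 = 1 - ρ ^ 2 := sq_sqrt (by nlinarith [hρ.1, hρ.2])
  have h_int : Integrable (fun p : (ℝ × ℝ) × ℝ ↦
      Real.cos (γ * p.1.1 + p.2) * Real.cos (γ * (ρ * p.1.1 + s * p.1.2) + p.2))
      (((gaussianReal 0 1).prod (gaussianReal 0 1)).prod uniform02pi) :=
    .of_bound (by fun_prop) 1 (ae_of_all _ fun p ↦ by
      simpa [abs_mul] using mul_le_one₀ (abs_cos_le_one _) (abs_nonneg _) (abs_cos_le_one _))
  rw [integral_prod _ h_int]
  simp_rw [integral_cos_add_mul_cos_add_uniform02pi]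
  calc ∫ q : ℝ × ℝ, Real.cos (γ * q.1 - γ * (ρ * q.1 + s * q.2)) / 2 ∂_
      = (∫ q : ℝ × ℝ, Real.cos (0 + γ * (1 - ρ) * q.1 + -(γ * s) * q.2)
          ∂(gaussianReal 0 1).prod (gaussianReal 0 1)) / 2 := by
        rw [← integral_div]
        congr with q
        ring_nf
    _ = 1 / 2 * rexp (-γ ^ 2 * (1 - ρ)) := by
        rw [integral_cos_add_mul_add_mul_gaussianReal_prod, Real.cos_zero, one_mul]
        field_simp
        congr 1
        linear_combination (-γ ^ 2 / 2) * hs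

/-- for (X, Y) bivariate normal with mean 0, unit variances and correlation
ρ ∈ [−1,1] (realized as X, Y = ρX + √(1−ρ²)Z with X, Z independent standard normals), and
τ ~ Uniform(0,2π) independent, E[cos(γX + τ) cos(γY + τ)] = (1/2) e^{−γ²(1 − ρ)}. -/
theorem stmt5 (γ ρ : ℝ) (hγ : 0 < γ) (hρ : ρ ∈ Set.Icc (-1 : ℝ) 1) :
    ∫ p : (ℝ × ℝ) × ℝ,
        Real.cos (γ * p.1.1 + p.2) *
        Real.cos (γ * (ρ * p.1.1 + Real.sqrt (1 - ρ ^ 2) * p.1.2) + p.2)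
        ∂(((gaussianReal 0 1).prod (gaussianReal 0 1)).prod uniform02pi) =
      (1 / 2) * Real.exp (-γ ^ 2 * (1 - ρ)) :=
  stmt5_general γ ρ hρ
end

section
/- Let u, v be unit vectors with ρ = u^T v, and let ẑ = 2 sign(cos(γw^Tu + τ)) sign(cos(γw^Tv + τ)) where the signs arise from 1-bit stochastic rounding with borders {−1, 0, 1}. Then the 1-bit StocQ kernel estimator K̂ built from a single such feature satisfies E[K̂] = K(u,v) = e^{−γ²(1−ρ)} and Var[K̂] = 4 − K(u,v)². -/
open MeasureTheory ProbabilityTheory Real Set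

/-- The uniform distribution on (0, 1), driving the stochastic rounding. -/
noncomputable def uniform01 : Measure ℝ := volume.restrict (Set.Ioo (0 : ℝ) 1)

/-- 1-bit stochastic rounding of z ∈ [−1,1] with borders {−1,0,1}: using an auxiliary
uniform variable ξ, returns 1 with probability (z+1)/2 and −1 otherwise. -/
noncomputable def stocQ1bit (z ξ : ℝ) : ℝ := if ξ ≤ (z + 1) / 2 then 1 else -1

/-!
Given the feature values, the two roundings are independent and unbiased (`E Q(z) = z` on
`[-1, 1]`), so `E K̂ = E[2 z_u z_v]`. By the product-to-sum formula,
`2 z_u z_v = cos (γ wᵀ(u - v)) + cos (γ wᵀ(u + v) + 2τ)`: the second term averages to zero over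
the uniform phase `τ`, and the first is the real part of the characteristic function of the
standard Gaussian, `exp (-γ² ‖u - v‖² / 2) = exp (-γ² (1 - ρ))` for unit vectors `u, v`.
Since `K̂ = ±2`, `K̂² = 4` identically, which gives the variance.
-/

instance : IsProbabilityMeasure uniform01 :=
  ⟨by simp [uniform01, Real.volume_Ioo]⟩

instance : IsProbabilityMeasure uniform02pi :=
  ⟨by rw [uniform02pi, Measure.smul_apply, Measure.restrict_apply_univ, Real.volume_Ioo, sub_zero,
    smul_eq_mul, ENNReal.inv_mul_cancel (by simp [pi_pos]) ENNReal.ofReal_ne_top]⟩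

theorem measurable_stocQ1bit : Measurable (Function.uncurry stocQ1bit) :=
  Measurable.ite (measurableSet_le measurable_snd (by fun_prop)) measurable_const measurable_const

@[fun_prop]
theorem Measurable.stocQ1bit {α : Type*} [MeasurableSpace α] {f g : α → ℝ} (hf : Measurable f)
    (hg : Measurable g) : Measurable fun a => stocQ1bit (f a) (g a) :=
  measurable_stocQ1bit.comp (hf.prodMk hg)

theorem abs_stocQ1bit (z ξ : ℝ) : |stocQ1bit z ξ| = 1 := by
  unfold stocQ1bit; split_ifs <;> simp

theorem stocQ1bit_sq (z ξ : ℝ) : stocQ1bit z ξ ^ 2 = 1 := by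
  rw [← sq_abs, abs_stocQ1bit, one_pow]

theorem uniform01_real_Iic {c : ℝ} (hc₀ : 0 ≤ c) (hc₁ : c ≤ 1) : uniform01.real (Iic c) = c := by
  rw [uniform01, Measure.restrict_congr_set Ioo_ae_eq_Ioc,
    measureReal_restrict_apply measurableSet_Iic, inter_comm, Ioc_inter_Iic,
    min_eq_right hc₁, Real.volume_real_Ioc_of_le hc₀, sub_zero]

theorem integral_stocQ1bit_uniform01 {z : ℝ} (hz₀ : -1 ≤ z) (hz₁ : z ≤ 1) :
    ∫ ξ, stocQ1bit z ξ ∂uniform01 = z := by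
  have hQ : stocQ1bit z = fun ξ => (Iic ((z + 1) / 2)).indicator (fun _ => (2 : ℝ)) ξ - 1 := by
    ext ξ
    by_cases hξ : ξ ≤ (z + 1) / 2 <;> norm_num [stocQ1bit, hξ]
  simp only [hQ]
  rw [integral_sub ((integrable_const 2).indicator measurableSet_Iic) (integrable_const 1),
    integral_indicator_const 2 measurableSet_Iic, uniform01_real_Iic (by linarith) (by linarith)]
  simp

theorem integral_mul_stocQ1bit_mul_stocQ1bit {α : Type*} [MeasurableSpace α] {μ : Measure α}
    [IsFiniteMeasure μ] {x y : α → ℝ} (hx : Measurable x) (hy : Measurable y)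
    (hx₁ : ∀ a, |x a| ≤ 1) (hy₁ : ∀ a, |y a| ≤ 1) (c : ℝ) :
    ∫ p, c * stocQ1bit (x p.1) p.2.1 * stocQ1bit (y p.1) p.2.2
        ∂(μ.prod (uniform01.prod uniform01)) = ∫ a, c * x a * y a ∂μ := by
  have hint : Integrable
      (fun p : α × ℝ × ℝ => c * stocQ1bit (x p.1) p.2.1 * stocQ1bit (y p.1) p.2.2)
      (μ.prod (uniform01.prod uniform01)) := by
    refine Integrable.of_bound (C := |c|) ?_ (ae_of_all _ fun p => ?_)
    · fun_prop
    · simp [abs_stocQ1bit]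
  rw [integral_prod _ hint]
  refine integral_congr_ae (ae_of_all _ fun a => ?_)
  simp only [mul_assoc]
  rw [integral_const_mul, integral_prod_mul (stocQ1bit (x a)) (stocQ1bit (y a)),
    integral_stocQ1bit_uniform01 (abs_le.1 (hx₁ a)).1 (abs_le.1 (hx₁ a)).2,
    integral_stocQ1bit_uniform01 (abs_le.1 (hy₁ a)).1 (abs_le.1 (hy₁ a)).2]

theorem integral_cos_sum_mul_gaussianReal_pi {ι : Type*} [Fintype ι] (a : ι → ℝ) :
    ∫ w, cos (∑ i, w i * a i) ∂(Measure.pi fun _ : ι => gaussianReal 0 1) =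
      exp (-(∑ i, a i ^ 2) / 2) := by
  set t : EuclideanSpace ℝ ι := WithLp.toLp 2 a
  have hint : Integrable (fun w : ι → ℝ => Complex.exp (inner ℝ (WithLp.toLp 2 w) t * Complex.I))
      (Measure.pi fun _ : ι => gaussianReal 0 1) :=
    (integrable_const (1 : ℝ)).mono' (by fun_prop)
      (ae_of_all _ fun w => (Complex.norm_exp_ofReal_mul_I _).le)
  calc ∫ w, cos (∑ i, w i * a i) ∂(Measure.pi fun _ : ι => gaussianReal 0 1)
      = ∫ w, RCLike.re (Complex.exp (inner ℝ (WithLp.toLp 2 w) t * Complex.I))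
          ∂(Measure.pi fun _ : ι => gaussianReal 0 1) := by
        simp only [t, PiLp.inner_apply, RCLike.inner_apply, conj_trivial, RCLike.re_to_complex,
          Complex.exp_ofReal_mul_I_re, mul_comm (a _)]
    _ = RCLike.re (charFun (stdGaussian (EuclideanSpace ℝ ι)) t) := by
        rw [integral_re hint, ← map_pi_eq_stdGaussian, charFun_apply,
          integral_map (by fun_prop) (by fun_prop)]
    _ = exp (-(∑ i, a i ^ 2) / 2) := by
        rw [charFun_stdGaussian, ← Complex.ofReal_pow, EuclideanSpace.real_norm_sq_eq]
        exact_mod_cast Complex.exp_ofReal_re _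

theorem integral_cos_add_int_mul_uniform02pi (c : ℝ) {n : ℤ} (hn : n ≠ 0) :
    ∫ τ, cos (c + n * τ) ∂uniform02pi = 0 := by
  have hn' : (n : ℝ) ≠ 0 := Int.cast_ne_zero.2 hn
  rw [uniform02pi, integral_smul_measure, ← integral_Ioc_eq_integral_Ioo,
    ← intervalIntegral.integral_of_le two_pi_pos.le]
  simp_rw [add_comm c]
  rw [intervalIntegral.integral_comp_mul_add cos hn', integral_cos, mul_zero, zero_add,
    add_comm _ c, sin_add_int_mul_two_pi, sub_self, smul_zero, smul_zero]

theorem integral_two_mul_cos_mul_cos_randomFourierFeature {ι : Type*} [Fintype ι] (γ : ℝ)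
    (a b : ι → ℝ) :
    ∫ p : (ι → ℝ) × ℝ, 2 * cos (γ * ∑ i, p.1 i * a i + p.2) * cos (γ * ∑ i, p.1 i * b i + p.2)
        ∂((Measure.pi fun _ : ι => gaussianReal 0 1).prod uniform02pi) =
      exp (-γ ^ 2 * (∑ i, (a i - b i) ^ 2) / 2) := by
  have hsplit : ∀ p : (ι → ℝ) × ℝ,
      2 * cos (γ * ∑ i, p.1 i * a i + p.2) * cos (γ * ∑ i, p.1 i * b i + p.2) =
        cos (∑ i, p.1 i * (γ * (a i - b i))) +
          cos ((γ * ∑ i, p.1 i * a i + γ * ∑ i, p.1 i * b i) + ((2 : ℤ) : ℝ) * p.2) := by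
    intro p
    rw [two_mul_cos_mul_cos]
    congr 2
    · rw [add_sub_add_right_eq_sub, Finset.mul_sum, Finset.mul_sum, ← Finset.sum_sub_distrib]
      exact Finset.sum_congr rfl fun i _ => by ring
    · push_cast
      ring
  have hcos_int : ∀ f : (ι → ℝ) × ℝ → ℝ, Continuous f → Integrable (fun p => cos (f p))
      ((Measure.pi fun _ : ι => gaussianReal 0 1).prod uniform02pi) := fun f hf =>
    Integrable.of_bound (by fun_prop) 1 (ae_of_all _ fun p => abs_cos_le_one _)
  simp only [hsplit]
  rw [integral_add (hcos_int _ (by fun_prop)) (hcos_int _ (by fun_prop)),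
    integral_prod _ (hcos_int _ (by fun_prop)), integral_prod _ (hcos_int _ (by fun_prop))]
  simp only [integral_const, integral_cos_sum_mul_gaussianReal_pi,
    integral_cos_add_int_mul_uniform02pi _ two_ne_zero, probReal_univ, one_smul,
    add_zero, mul_pow, ← Finset.mul_sum, neg_mul]

theorem stmt11_general (d : ℕ) (u v : Fin d → ℝ) (γ ρ : ℝ)
    (hu : ∑ i, u i ^ 2 = 1) (hv : ∑ i, v i ^ 2 = 1)
    (hρ : ρ = ∑ i, u i * v i) :
    (∫ p : ((Fin d → ℝ) × ℝ) × (ℝ × ℝ),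
        2 * stocQ1bit (Real.cos (γ * (∑ i, p.1.1 i * u i) + p.1.2)) p.2.1 *
            stocQ1bit (Real.cos (γ * (∑ i, p.1.1 i * v i) + p.1.2)) p.2.2
        ∂(((Measure.pi fun _ : Fin d => gaussianReal 0 1).prod uniform02pi).prod
            (uniform01.prod uniform01)) =
      Real.exp (-γ ^ 2 * (1 - ρ))) ∧
    (∫ p : ((Fin d → ℝ) × ℝ) × (ℝ × ℝ),
        (2 * stocQ1bit (Real.cos (γ * (∑ i, p.1.1 i * u i) + p.1.2)) p.2.1 *
             stocQ1bit (Real.cos (γ * (∑ i, p.1.1 i * v i) + p.1.2)) p.2.2) ^ 2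
        ∂(((Measure.pi fun _ : Fin d => gaussianReal 0 1).prod uniform02pi).prod
            (uniform01.prod uniform01))) -
      (Real.exp (-γ ^ 2 * (1 - ρ))) ^ 2 =
      4 - (Real.exp (-γ ^ 2 * (1 - ρ))) ^ 2 := by
  have hdist : ∑ i, (u i - v i) ^ 2 = 2 * (1 - ρ) := by
    simp only [sub_sq, Finset.sum_add_distrib, Finset.sum_sub_distrib, mul_assoc,
      ← Finset.mul_sum]
    rw [hu, hv, ← hρ]
    ring
  refine ⟨?_, ?_⟩
  · rw [integral_mul_stocQ1bit_mul_stocQ1bit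
      (x := fun p : (Fin d → ℝ) × ℝ => cos (γ * ∑ i, p.1 i * u i + p.2))
      (y := fun p : (Fin d → ℝ) × ℝ => cos (γ * ∑ i, p.1 i * v i + p.2))
      (by fun_prop) (by fun_prop) (fun _ => abs_cos_le_one _) (fun _ => abs_cos_le_one _),
      integral_two_mul_cos_mul_cos_randomFourierFeature, hdist]
    congr 1
    ring
  · simp only [mul_pow, stocQ1bit_sq, integral_const, probReal_univ]
    norm_num

/-- the 1-bit StocQ kernel estimator K̂ = 2 Q(z_u) Q(z_v) built from one
random Fourier feature satisfies E[K̂] = e^{−γ²(1−ρ)} and Var[K̂] = 4 − e^{−γ²(1−ρ)}². -/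
theorem stmt11 (d : ℕ) (u v : Fin d → ℝ) (γ ρ : ℝ) (hγ : 0 < γ)
    (hu : ∑ i, u i ^ 2 = 1) (hv : ∑ i, v i ^ 2 = 1)
    (hρ : ρ = ∑ i, u i * v i) :
    (∫ p : ((Fin d → ℝ) × ℝ) × (ℝ × ℝ),
        2 * stocQ1bit (Real.cos (γ * (∑ i, p.1.1 i * u i) + p.1.2)) p.2.1 *
            stocQ1bit (Real.cos (γ * (∑ i, p.1.1 i * v i) + p.1.2)) p.2.2
        ∂(((Measure.pi fun _ : Fin d => gaussianReal 0 1).prod uniform02pi).prod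
            (uniform01.prod uniform01)) =
      Real.exp (-γ ^ 2 * (1 - ρ))) ∧
    (∫ p : ((Fin d → ℝ) × ℝ) × (ℝ × ℝ),
        (2 * stocQ1bit (Real.cos (γ * (∑ i, p.1.1 i * u i) + p.1.2)) p.2.1 *
             stocQ1bit (Real.cos (γ * (∑ i, p.1.1 i * v i) + p.1.2)) p.2.2) ^ 2
        ∂(((Measure.pi fun _ : Fin d => gaussianReal 0 1).prod uniform02pi).prod
            (uniform01.prod uniform01))) -
      (Real.exp (-γ ^ 2 * (1 - ρ))) ^ 2 =
      4 - (Real.exp (-γ ^ 2 * (1 - ρ))) ^ 2 :=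
  stmt11_general d u v γ ρ hu hv hρ
end

section
/- Let (X, Y) be bivariate standard normal with correlation ρ, τ ~ Uniform(0, 2π) independent, s_x = γX + τ, s_y = γY + τ, z_x = cos(s_x), z_y = cos(s_y). For twice-differentiable bounded functions g₁, g₂: [−1,1] → ℝ, the derivative of E[g₁(z_x) g₂(z_y)] with respect to ρ equals γ² E[g₁′(z_x) sin(s_x) g₂′(z_y) sin(s_y)]. -/
/-!
With `Y_r = r X + √(1 - r²) Z`, differentiating under the integral gives
`E[(X - ρ Z / √(1 - ρ²)) ∂_y f(X, Y_ρ, τ)]` for `f x y τ = g₁(cos(γx + τ)) g₂(cos(γy + τ))`.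
Stein's lemma `E[X h(X)] = E[h'(X)]`, applied in `X` and in `Z`, turns `E[X ∂_y f]` into
`E[∂_x∂_y f + ρ ∂_y² f]` and `E[Z ∂_y f]` into `√(1 - ρ²) E[∂_y² f]`, so the `∂_y² f` terms cancel
and the derivative is `E[∂_x∂_y f]`, which is the claimed `γ² E[g₁'(z_x) sin s_x g₂'(z_y) sin s_y]`.
All functions of the phases involved are continuous and periodic, hence bounded.
-/

open MeasureTheory ProbabilityTheory Real Set

open Filter Topology
open scoped NNReal

local notation "𝒢[" ν "]" => Measure.prod (Measure.prod (gaussianReal 0 1) (gaussianReal 0 1)) ν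

lemma exists_abs_mul_le {α β : Type*} {u : α → ℝ} {w : β → ℝ} (hu : ∃ C, ∀ a, |u a| ≤ C)
    (hw : ∃ C, ∀ b, |w b| ≤ C) : ∃ C, ∀ a b, |u a * w b| ≤ C := by
  obtain ⟨C, hC⟩ := hu
  obtain ⟨D, hD⟩ := hw
  refine ⟨C * D, fun a b => ?_⟩
  rw [abs_mul]
  exact mul_le_mul (hC a) (hD b) (abs_nonneg _) ((abs_nonneg _).trans (hC a))

lemma Function.Periodic.deriv {f : ℝ → ℝ} {c : ℝ} (hf : Function.Periodic f c) :
    Function.Periodic (deriv f) c := fun x => by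
  rw [← deriv_comp_add_const, show (fun x => f (x + c)) = f from funext hf]

lemma Function.Periodic.exists_abs_le {f : ℝ → ℝ} {c : ℝ} (hf : Function.Periodic f c) (hc : c ≠ 0)
    (hcont : Continuous f) : ∃ C, ∀ x, |f x| ≤ C := by
  obtain ⟨C, hC⟩ := isBounded_iff_forall_norm_le.1 (hf.isBounded_of_continuous hc hcont)
  exact ⟨C, fun x => hC _ (mem_range_self x)⟩

lemma deriv_comp_cos {g : ℝ → ℝ} (hg : Differentiable ℝ g) (t : ℝ) :
    deriv (fun s => g (cos s)) t = -(deriv g (cos t) * sin t) :=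
  ((hg _).hasDerivAt.comp t (hasDerivAt_cos t)).deriv.trans (mul_neg _ _)

lemma hasDerivAt_sqrt_one_sub_sq {r : ℝ} (hr : 0 < 1 - r ^ 2) :
    HasDerivAt (fun r => √(1 - r ^ 2)) (-(r / √(1 - r ^ 2))) r := by
  refine (((hasDerivAt_pow 2 r).const_sub 1).sqrt hr.ne').congr_deriv ?_
  field_simp
  ring

lemma hasDerivAt_gaussianPDFReal (μ : ℝ) (v : ℝ≥0) (x : ℝ) :
    HasDerivAt (gaussianPDFReal μ v) (-((x - μ) / v) * gaussianPDFReal μ v x) x := by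
  have h : HasDerivAt (fun y => -(y - μ) ^ 2 / (2 * v)) (-(2 * (x - μ)) / (2 * v)) x := by
    simpa using (((hasDerivAt_id x).sub_const μ).pow 2).neg.div_const (2 * (v : ℝ))
  refine (h.exp.const_mul (√(2 * π * v))⁻¹).congr_deriv ?_
  rw [gaussianPDFReal]
  ring

lemma integrable_gaussianReal_iff {μ : ℝ} {v : ℝ≥0} (hv : v ≠ 0) {f : ℝ → ℝ} :
    Integrable f (gaussianReal μ v) ↔ Integrable (fun x => gaussianPDFReal μ v x * f x) := by
  rw [gaussianReal_of_var_ne_zero _ hv, integrable_withDensity_iff_integrable_smul'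
    (measurable_gaussianPDF _ _) (ae_of_all _ fun _ => gaussianPDF_lt_top)]
  simp [toReal_gaussianPDF]

lemma integrable_id_gaussianReal {μ : ℝ} {v : ℝ≥0} : Integrable id (gaussianReal μ v) :=
  (memLp_id_gaussianReal 1).integrable le_rfl

theorem stein_lemma_gaussianReal {μ : ℝ} {v : ℝ≥0} {h h' : ℝ → ℝ} {C : ℝ}
    (hd : ∀ x, HasDerivAt h (h' x) x) (hb : ∀ x, |h x| ≤ C)
    (hint : Integrable h' (gaussianReal μ v)) :
    ∫ x, (x - μ) * h x ∂gaussianReal μ v = v * ∫ x, h' x ∂gaussianReal μ v := by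
  rcases eq_or_ne v 0 with rfl | hv
  · simp [gaussianReal_zero_var]
  set φ := gaussianPDFReal μ v
  have hh : Continuous h := continuous_iff_continuousAt.2 fun x => (hd x).continuousAt
  have hxh : Integrable (fun x => (x - μ) * h x) (gaussianReal μ v) :=
    (integrable_id_gaussianReal.sub (integrable_const μ)).mul_bdd
      hh.aestronglyMeasurable (ae_of_all _ hb)
  rw [integrable_gaussianReal_iff hv] at hxh hint
  have ibp := integral_mul_deriv_eq_deriv_mul_of_integrable (u := h) (v := φ)
    (v' := fun x => -((x - μ) / v) * φ x) (fun x _ => hd x)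
    (fun x _ => hasDerivAt_gaussianPDFReal μ v x)
    ((hxh.const_mul (-(v : ℝ)⁻¹)).congr (ae_of_all _ fun x => by simp only [Pi.mul_apply]; ring))
    (hint.congr (ae_of_all _ fun x => by simp only [Pi.mul_apply]; ring))
    ((integrable_gaussianPDFReal μ v).bdd_mul hh.aestronglyMeasurable (ae_of_all _ hb))
  have hv' : (v : ℝ) ≠ 0 := NNReal.coe_ne_zero.2 hv
  rw [integral_gaussianReal_eq_integral_smul hv, integral_gaussianReal_eq_integral_smul hv]
  calc ∫ x, φ x • ((x - μ) * h x) = -v * ∫ x, h x * (-((x - μ) / v) * φ x) := by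
        rw [← integral_const_mul]; congr 1; ext x; rw [smul_eq_mul]; field_simp
    _ = v * ∫ x, φ x • h' x := by
        rw [ibp]; simp only [smul_eq_mul, mul_comm (φ _)]; ring

theorem stein_lemma_gaussianReal_prod {W : Type*} [MeasurableSpace W] {ν : Measure W}
    [IsFiniteMeasure ν] {μ : ℝ} {v : ℝ≥0} {h h' : ℝ × W → ℝ} {C : ℝ}
    (hd : ∀ x w, HasDerivAt (fun x => h (x, w)) (h' (x, w)) x)
    (hm : AEStronglyMeasurable h ((gaussianReal μ v).prod ν)) (hb : ∀ p, |h p| ≤ C)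
    (hint : Integrable h' ((gaussianReal μ v).prod ν)) :
    ∫ p, (p.1 - μ) * h p ∂(gaussianReal μ v).prod ν = v * ∫ p, h' p ∂(gaussianReal μ v).prod ν := by
  have hxh : Integrable (fun p : ℝ × W => (p.1 - μ) * h p) ((gaussianReal μ v).prod ν) :=
    ((integrable_id_gaussianReal.comp_fst ν) |>.sub (integrable_const μ)).mul_bdd
      hm (ae_of_all _ hb)
  rw [integral_prod_symm _ hxh, integral_prod_symm _ hint, ← integral_const_mul]
  refine integral_congr_ae ?_
  filter_upwards [hint.prod_left_ae] with w hw
  exact stein_lemma_gaussianReal (fun x => hd x w) (fun x => hb (x, w)) hw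

section StandardGaussianPair

variable {Ω : Type*} [MeasurableSpace Ω] {ν : Measure Ω} [IsFiniteMeasure ν]

theorem stein_lemma_fst_fst {h hx : (ℝ × ℝ) × Ω → ℝ} {C : ℝ}
    (hd : ∀ x z ω, HasDerivAt (fun x => h ((x, z), ω)) (hx ((x, z), ω)) x)
    (hm : AEStronglyMeasurable h 𝒢[ν]) (hb : ∀ p, |h p| ≤ C)
    (hint : Integrable hx 𝒢[ν]) :
    ∫ p, p.1.1 * h p ∂𝒢[ν] = ∫ p, hx p ∂𝒢[ν] := by
  have e := (measurePreserving_prodAssoc (gaussianReal 0 1) (gaussianReal 0 1) ν).symm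
  rw [← e.integral_comp', ← e.integral_comp']
  have key := stein_lemma_gaussianReal_prod (h := h ∘ MeasurableEquiv.prodAssoc.symm)
    (h' := hx ∘ MeasurableEquiv.prodAssoc.symm)
    (fun x w => hd x w.1 w.2) (hm.comp_measurePreserving e) (fun p => hb _)
    (e.integrable_comp_emb (MeasurableEquiv.measurableEmbedding _) |>.2 hint)
  simp only [sub_zero, NNReal.coe_one, one_mul] at key
  exact key

theorem stein_lemma_fst_snd {h hz : (ℝ × ℝ) × Ω → ℝ} {C : ℝ}
    (hd : ∀ x z ω, HasDerivAt (fun z => h ((x, z), ω)) (hz ((x, z), ω)) z)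
    (hm : AEStronglyMeasurable h 𝒢[ν]) (hb : ∀ p, |h p| ≤ C)
    (hint : Integrable hz 𝒢[ν]) :
    ∫ p, p.1.2 * h p ∂𝒢[ν] = ∫ p, hz p ∂𝒢[ν] := by
  let σ : (ℝ × ℝ) × Ω ≃ᵐ (ℝ × ℝ) × Ω := MeasurableEquiv.prodComm.prodCongr (.refl Ω)
  have e : MeasurePreserving σ 𝒢[ν] 𝒢[ν] :=
    Measure.measurePreserving_swap.prod (.id ν)
  rw [← e.integral_comp' (fun p => p.1.2 * h p), ← e.integral_comp' hz]
  exact stein_lemma_fst_fst (h := h ∘ σ) (hx := hz ∘ σ) (fun x z ω => hd z x ω)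
    (hm.comp_measurePreserving e)
    (fun p => hb _) (e.integrable_comp_emb σ.measurableEmbedding |>.2 hint)

lemma integrable_fst_fst : Integrable (fun p : (ℝ × ℝ) × Ω => p.1.1) 𝒢[ν] :=
  (integrable_id_gaussianReal.comp_fst _).comp_fst ν

lemma integrable_fst_snd : Integrable (fun p : (ℝ × ℝ) × Ω => p.1.2) 𝒢[ν] :=
  (integrable_id_gaussianReal.comp_snd _).comp_fst ν

-- If `h = u(X, ρ X + √(1 - ρ²) Z)`, then `A = ∂ₓu` and `B = ∂ᵧu` along the graph.
theorem stein_lemma_correlated {ρ C : ℝ} (hρ : ρ ∈ Ioo (-1 : ℝ) 1) {h A B : (ℝ × ℝ) × Ω → ℝ}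
    (hdx : ∀ x z ω, HasDerivAt (fun x => h ((x, z), ω)) (A ((x, z), ω) + ρ * B ((x, z), ω)) x)
    (hdz : ∀ x z ω, HasDerivAt (fun z => h ((x, z), ω)) (√(1 - ρ ^ 2) * B ((x, z), ω)) z)
    (hm : AEStronglyMeasurable h 𝒢[ν]) (hb : ∀ p, |h p| ≤ C)
    (hA : Integrable A 𝒢[ν]) (hB : Integrable B 𝒢[ν]) :
    ∫ p, (p.1.1 - ρ / √(1 - ρ ^ 2) * p.1.2) * h p ∂𝒢[ν] = ∫ p, A p ∂𝒢[ν] := by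
  set c := √(1 - ρ ^ 2)
  have hc : c ≠ 0 := sqrt_ne_zero'.2 (by nlinarith [hρ.1, hρ.2])
  have hX := stein_lemma_fst_fst (hx := fun p => A p + ρ * B p) hdx hm hb (hA.add (hB.const_mul ρ))
  have hZ := stein_lemma_fst_snd (hz := fun p => c * B p) hdz hm hb (hB.const_mul c)
  calc ∫ p, (p.1.1 - ρ / c * p.1.2) * h p ∂𝒢[ν]
      = ∫ p, p.1.1 * h p ∂𝒢[ν] - ρ / c * ∫ p, p.1.2 * h p ∂𝒢[ν] := by
        rw [← integral_const_mul, ← integral_sub (integrable_fst_fst.mul_bdd hm (ae_of_all _ hb))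
          ((integrable_fst_snd.mul_bdd hm (ae_of_all _ hb)).const_mul _)]
        congr 1; ext p; ring
    _ = ∫ p, A p ∂𝒢[ν] := by
        rw [hX, hZ, integral_add hA (hB.const_mul ρ), integral_const_mul, integral_const_mul]
        field_simp
        ring

theorem hasDerivAt_integral_comp_correlated {f fy : ℝ → ℝ → Ω → ℝ} {ρ : ℝ}
    (hρ : ρ ∈ Ioo (-1 : ℝ) 1)
    (hf : Measurable fun q : ℝ × ℝ × Ω => f q.1 q.2.1 q.2.2)
    (hfy : Measurable fun q : ℝ × ℝ × Ω => fy q.1 q.2.1 q.2.2)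
    (hf_bdd : ∃ C, ∀ x y ω, |f x y ω| ≤ C) (hfy_bdd : ∃ C, ∀ x y ω, |fy x y ω| ≤ C)
    (hderiv : ∀ x y ω, HasDerivAt (fun y => f x y ω) (fy x y ω) y) :
    HasDerivAt (fun r => ∫ p, f p.1.1 (r * p.1.1 + √(1 - r ^ 2) * p.1.2) p.2 ∂𝒢[ν])
      (∫ p, (p.1.1 - ρ / √(1 - ρ ^ 2) * p.1.2) *
        fy p.1.1 (ρ * p.1.1 + √(1 - ρ ^ 2) * p.1.2) p.2 ∂𝒢[ν]) ρ := by
  obtain ⟨C, hC⟩ := hf_bdd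
  obtain ⟨D, hD⟩ := hfy_bdd
  have hρ2 : 0 < 1 - ρ ^ 2 := by nlinarith [hρ.1, hρ.2]
  set K := |ρ / √(1 - ρ ^ 2)| + 1
  have hnear : ∀ᶠ r in 𝓝 ρ, 0 < 1 - r ^ 2 ∧ |r / √(1 - r ^ 2)| < K := by
    have hcont : ContinuousAt (fun r => |r / √(1 - r ^ 2)|) ρ :=
      by fun_prop (disch := exact sqrt_ne_zero'.2 hρ2)
    exact ((continuous_const.sub (continuous_pow 2)).continuousAt.eventually (lt_mem_nhds hρ2)).and
      (hcont.eventually (gt_mem_nhds (lt_add_one _)))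
  have hmeas (r c : ℝ) :
      Measurable fun p : (ℝ × ℝ) × Ω => (p.1.1, r * p.1.1 + c * p.1.2, p.2) := by
    fun_prop
  refine (hasDerivAt_integral_of_dominated_loc_of_deriv_le
    (F' := fun r p => (p.1.1 - r / √(1 - r ^ 2) * p.1.2) *
      fy p.1.1 (r * p.1.1 + √(1 - r ^ 2) * p.1.2) p.2)
    (bound := fun p => (|p.1.1| + K * |p.1.2|) * D) hnear
    (Eventually.of_forall fun r => (hf.comp (hmeas _ _)).aestronglyMeasurable)
    (.of_bound (hf.comp (hmeas _ _)).aestronglyMeasurable C (ae_of_all _ fun _ => hC _ _ _))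
    (by fun_prop) ?_ ?_ ?_).2
  · refine ae_of_all _ fun p r hr => ?_
    have hcoef : |p.1.1 - r / √(1 - r ^ 2) * p.1.2| ≤ |p.1.1| + K * |p.1.2| :=
      (abs_sub _ _).trans (by rw [abs_mul]; gcongr; exact hr.2.le)
    rw [norm_mul, Real.norm_eq_abs, Real.norm_eq_abs]
    exact mul_le_mul hcoef (hD _ _ _) (abs_nonneg _) (by positivity)
  · exact (integrable_fst_fst.abs.add (integrable_fst_snd.abs.const_mul K)).mul_const D
  · refine ae_of_all _ fun p r hr => ?_
    have hY : HasDerivAt (fun r => r * p.1.1 + √(1 - r ^ 2) * p.1.2)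
        (p.1.1 - r / √(1 - r ^ 2) * p.1.2) r :=
      (((hasDerivAt_id r).mul_const _).add
        ((hasDerivAt_sqrt_one_sub_sq hr.1).mul_const _)).congr_deriv (by ring)
    exact ((hderiv _ _ _).comp r hY).congr_deriv (mul_comm _ _)

end StandardGaussianPair

section Phase

variable {ν : Measure ℝ} [IsFiniteMeasure ν] {γ ρ : ℝ} {G₁ G₂ : ℝ → ℝ}

theorem stein_lemma_correlated_phase (hρ : ρ ∈ Ioo (-1 : ℝ) 1)
    (hG₁ : ContDiff ℝ 1 G₁) (hG₂ : ContDiff ℝ 2 G₂)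
    (hG₁_bdd : ∃ C, ∀ s, |G₁ s| ≤ C) (hG₁'_bdd : ∃ C, ∀ s, |deriv G₁ s| ≤ C)
    (hG₂'_bdd : ∃ C, ∀ s, |deriv G₂ s| ≤ C) (hG₂''_bdd : ∃ C, ∀ s, |deriv (deriv G₂) s| ≤ C) :
    ∫ p, (p.1.1 - ρ / √(1 - ρ ^ 2) * p.1.2) *
        (G₁ (γ * p.1.1 + p.2) * deriv G₂ (γ * (ρ * p.1.1 + √(1 - ρ ^ 2) * p.1.2) + p.2)) ∂𝒢[ν] =
      γ * ∫ p, deriv G₁ (γ * p.1.1 + p.2) *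
        deriv G₂ (γ * (ρ * p.1.1 + √(1 - ρ ^ 2) * p.1.2) + p.2) ∂𝒢[ν] := by
  set c := √(1 - ρ ^ 2)
  have hG₂' : ContDiff ℝ 1 (deriv G₂) := hG₂.deriv'
  have hd₁ (s : ℝ) : HasDerivAt G₁ (deriv G₁ s) s := (hG₁.differentiable one_ne_zero s).hasDerivAt
  have hd₂ (s : ℝ) : HasDerivAt (deriv G₂) (deriv (deriv G₂) s) s :=
    (hG₂'.differentiable one_ne_zero s).hasDerivAt
  have := hG₁.continuous
  have := hG₁.continuous_deriv le_rfl
  have := hG₂'.continuous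
  have := hG₂'.continuous_deriv le_rfl
  obtain ⟨Ch, hCh⟩ := exists_abs_mul_le hG₁_bdd hG₂'_bdd
  obtain ⟨CT, hCT⟩ := exists_abs_mul_le hG₁'_bdd hG₂'_bdd
  obtain ⟨CB, hCB⟩ := exists_abs_mul_le hG₁_bdd hG₂''_bdd
  refine (stein_lemma_correlated (ν := ν) hρ
    (h := fun p => G₁ (γ * p.1.1 + p.2) * deriv G₂ (γ * (ρ * p.1.1 + c * p.1.2) + p.2))
    (A := fun p => γ * (deriv G₁ (γ * p.1.1 + p.2) *
      deriv G₂ (γ * (ρ * p.1.1 + c * p.1.2) + p.2)))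
    (B := fun p => γ * (G₁ (γ * p.1.1 + p.2) *
      deriv (deriv G₂) (γ * (ρ * p.1.1 + c * p.1.2) + p.2)))
    (fun x z τ => ?_) (fun x z τ => ?_) (by fun_prop) (fun _ => hCh _ _)
    ((Integrable.of_bound (by fun_prop) CT (ae_of_all _ fun _ => hCT _ _)).const_mul γ)
    ((Integrable.of_bound (by fun_prop) CB (ae_of_all _ fun _ => hCB _ _)).const_mul γ)).trans
    (integral_const_mul _ _)
  · have hsx : HasDerivAt (fun x => γ * x + τ) γ x :=
      (((hasDerivAt_id x).const_mul γ).add_const τ).congr_deriv (mul_one γ)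
    have hsy : HasDerivAt (fun x => γ * (ρ * x + c * z) + τ) (γ * ρ) x :=
      (((((hasDerivAt_id x).const_mul ρ).add_const _).const_mul γ).add_const τ).congr_deriv
        (by rw [mul_one])
    exact (((hd₁ _).comp x hsx).mul ((hd₂ _).comp x hsy)).congr_deriv
      (by simp only [Function.comp_apply]; ring)
  · have hsy : HasDerivAt (fun z => γ * (ρ * x + c * z) + τ) (γ * c) z :=
      (((((hasDerivAt_id z).const_mul c).const_add _).const_mul γ).add_const τ).congr_deriv
        (by rw [mul_one])
    exact (((hd₂ _).comp z hsy).const_mul (G₁ (γ * x + τ))).congr_deriv (by ring)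

theorem hasDerivAt_integral_mul_phase (hρ : ρ ∈ Ioo (-1 : ℝ) 1)
    (hG₁ : ContDiff ℝ 1 G₁) (hG₂ : ContDiff ℝ 2 G₂)
    (hG₁_bdd : ∃ C, ∀ s, |G₁ s| ≤ C) (hG₁'_bdd : ∃ C, ∀ s, |deriv G₁ s| ≤ C)
    (hG₂_bdd : ∃ C, ∀ s, |G₂ s| ≤ C) (hG₂'_bdd : ∃ C, ∀ s, |deriv G₂ s| ≤ C)
    (hG₂''_bdd : ∃ C, ∀ s, |deriv (deriv G₂) s| ≤ C) :
    HasDerivAt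
      (fun r => ∫ p, G₁ (γ * p.1.1 + p.2) *
        G₂ (γ * (r * p.1.1 + √(1 - r ^ 2) * p.1.2) + p.2) ∂𝒢[ν])
      (γ ^ 2 * ∫ p, deriv G₁ (γ * p.1.1 + p.2) *
        deriv G₂ (γ * (ρ * p.1.1 + √(1 - ρ ^ 2) * p.1.2) + p.2) ∂𝒢[ν]) ρ := by
  have := hG₁.continuous
  have := hG₂.continuous
  have := hG₂.continuous_deriv one_le_two
  obtain ⟨C, hC⟩ := exists_abs_mul_le hG₁_bdd hG₂'_bdd
  have hA := hasDerivAt_integral_comp_correlated (ν := ν) hρ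
    (f := fun x y τ => G₁ (γ * x + τ) * G₂ (γ * y + τ))
    (fy := fun x y τ => γ * (G₁ (γ * x + τ) * deriv G₂ (γ * y + τ)))
    (by fun_prop) (by fun_prop) ((exists_abs_mul_le hG₁_bdd hG₂_bdd).imp fun _ h _ _ _ => h _ _)
    ⟨|γ| * C, fun x y τ => by rw [abs_mul]; exact mul_le_mul_of_nonneg_left (hC _ _) (abs_nonneg γ)⟩
    (fun x y τ => ?_)
  · convert hA using 1
    rw [pow_two, mul_assoc, ← stein_lemma_correlated_phase hρ hG₁ hG₂ hG₁_bdd hG₁'_bdd hG₂'_bdd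
      hG₂''_bdd, ← integral_const_mul]
    congr 1; ext p; ring
  · have hsy : HasDerivAt (fun y => γ * y + τ) γ y :=
      (((hasDerivAt_id y).const_mul γ).add_const τ).congr_deriv (mul_one γ)
    exact ((((hG₂.differentiable two_ne_zero) _).hasDerivAt.comp y hsy).const_mul _).congr_deriv
      (by ring)

end Phase

instance inst_s16 : IsProbabilityMeasure uniform02pi := by
  constructor
  rw [uniform02pi, Measure.smul_apply, Measure.restrict_apply MeasurableSet.univ, univ_inter,
    volume_Ioo, smul_eq_mul, sub_zero]
  exact ENNReal.inv_mul_cancel (by simp [pi_pos]) ENNReal.ofReal_ne_top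

theorem stmt16_general (γ ρ : ℝ) (hρ : ρ ∈ Set.Ioo (-1 : ℝ) 1)
    (g₁ g₂ : ℝ → ℝ) (h₁ : ContDiff ℝ 2 g₁) (h₂ : ContDiff ℝ 2 g₂) :
    HasDerivAt
      (fun r => ∫ p : (ℝ × ℝ) × ℝ,
        g₁ (Real.cos (γ * p.1.1 + p.2)) *
          g₂ (Real.cos (γ * (r * p.1.1 + Real.sqrt (1 - r ^ 2) * p.1.2) + p.2))
        ∂(((gaussianReal 0 1).prod (gaussianReal 0 1)).prod uniform02pi))
      (γ ^ 2 * ∫ p : (ℝ × ℝ) × ℝ,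
        deriv g₁ (Real.cos (γ * p.1.1 + p.2)) * Real.sin (γ * p.1.1 + p.2) *
          (deriv g₂ (Real.cos (γ * (ρ * p.1.1 + Real.sqrt (1 - ρ ^ 2) * p.1.2) + p.2)) *
            Real.sin (γ * (ρ * p.1.1 + Real.sqrt (1 - ρ ^ 2) * p.1.2) + p.2))
        ∂(((gaussianReal 0 1).prod (gaussianReal 0 1)).prod uniform02pi))
      ρ := by
  have hper (g : ℝ → ℝ) : Function.Periodic (fun s => g (cos s)) (2 * π) := cos_periodic.comp g
  have hbdd {G : ℝ → ℝ} (hG : Function.Periodic G (2 * π)) (hc : Continuous G) :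
      ∃ C, ∀ s, |G s| ≤ C :=
    hG.exists_abs_le two_pi_pos.ne' hc
  have c₁ := h₁.comp contDiff_cos
  have c₂ := h₂.comp contDiff_cos
  have key := hasDerivAt_integral_mul_phase (ν := uniform02pi) (γ := γ)
    (G₁ := fun s => g₁ (cos s)) (G₂ := fun s => g₂ (cos s)) hρ (c₁.of_le one_le_two) c₂
    (hbdd (hper g₁) c₁.continuous) (hbdd (hper g₁).deriv (c₁.continuous_deriv one_le_two))
    (hbdd (hper g₂) c₂.continuous) (hbdd (hper g₂).deriv (c₂.continuous_deriv one_le_two))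
    (hbdd (hper g₂).deriv.deriv (c₂.deriv'.continuous_deriv le_rfl))
  convert key using 3
  ext p
  rw [deriv_comp_cos (h₁.differentiable two_ne_zero),
    deriv_comp_cos (h₂.differentiable two_ne_zero)]
  ring

/-- for (X,Y) bivariate standard normal with correlation ρ (realized via
Y = ρX + √(1−ρ²)Z), τ ~ Uniform(0,2π), s_x = γX + τ, s_y = γY + τ, z_x = cos s_x,
z_y = cos s_y, and twice-differentiable bounded g₁, g₂,
d/dρ E[g₁(z_x) g₂(z_y)] = γ² E[g₁′(z_x) sin(s_x) g₂′(z_y) sin(s_y)]. -/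
theorem stmt16 (γ ρ : ℝ) (hγ : 0 < γ) (hρ : ρ ∈ Set.Ioo (-1 : ℝ) 1)
    (g₁ g₂ : ℝ → ℝ) (h₁ : ContDiff ℝ 2 g₁) (h₂ : ContDiff ℝ 2 g₂)
    (hb₁ : ∃ C, ∀ x, |g₁ x| ≤ C) (hb₂ : ∃ C, ∀ x, |g₂ x| ≤ C) :
    HasDerivAt
      (fun r => ∫ p : (ℝ × ℝ) × ℝ,
        g₁ (Real.cos (γ * p.1.1 + p.2)) *
          g₂ (Real.cos (γ * (r * p.1.1 + Real.sqrt (1 - r ^ 2) * p.1.2) + p.2))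
        ∂(((gaussianReal 0 1).prod (gaussianReal 0 1)).prod uniform02pi))
      (γ ^ 2 * ∫ p : (ℝ × ℝ) × ℝ,
        deriv g₁ (Real.cos (γ * p.1.1 + p.2)) * Real.sin (γ * p.1.1 + p.2) *
          (deriv g₂ (Real.cos (γ * (ρ * p.1.1 + Real.sqrt (1 - ρ ^ 2) * p.1.2) + p.2)) *
            Real.sin (γ * (ρ * p.1.1 + Real.sqrt (1 - ρ ^ 2) * p.1.2) + p.2))
        ∂(((gaussianReal 0 1).prod (gaussianReal 0 1)).prod uniform02pi))
      ρ :=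
  stmt16_general γ ρ hρ g₁ g₂ h₁ h₂
end
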